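/- arXiv:1605.03354 — 4 statements merged into one kernel-verified Lean document; each statement's English description precedes it below -/
import Mathlib

section
/- If I is a saturated sequence of open intervals and λ([0,1] \ ⋃I) = 0, then there exists a pairwise disjoint subsequence J of I with λ([0,1] \ ⋃J) = 0. -/
open MeasureTheory Set

def itv (p : ℝ × ℝ) : Set ℝ := Set.Ioo p.1 p.2

def Captures (I : ℕ → ℝ × ℝ) (x : ℝ) : Prop :=
  ∀ ε : ℝ, 0 < ε → ∃ n, Metric.diam (itv (I n)) < ε ∧ x ∈ itv (I n)

def IsVitaliCover (I : ℕ → ℝ × ℝ) (A : Set ℝ) : Prop :=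
  ∀ x ∈ A, Captures I x

def Eliminates (I : ℕ → ℝ × ℝ) (S : Set ℕ) (A : Set ℝ) : Prop :=
  (S.Pairwise fun m n => Disjoint (itv (I m)) (itv (I n))) ∧
  volume (A \ ⋃ n ∈ S, itv (I n)) = 0

def Saturated (I : ℕ → ℝ × ℝ) : Prop :=
  IsVitaliCover I (⋃ n, itv (I n))

theorem stmt5 (I : ℕ → ℝ × ℝ) (hsat : Saturated I)
    (h0 : volume (Set.Icc (0:ℝ) 1 \ ⋃ n, itv (I n)) = 0) :
    ∃ S : Set ℕ, Eliminates I S (Set.Icc (0:ℝ) 1) := by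
  classical
  set s : Set ℝ := Set.Icc (0:ℝ) 1 ∩ ⋃ n, itv (I n) with hs
  set t : Set (ℕ × ℝ) := {p | p.2 ∈ itv (I p.1)} with ht_def
  have hlt : ∀ p ∈ t, (I p.1).1 < (I p.1).2 := by
    intro p hp
    exact lt_trans hp.1 hp.2
  obtain ⟨u, hut, hucount, hudisj, humeas⟩ :=
    Vitali.exists_disjoint_covering_ae (volume : Measure ℝ) s t 6
      (fun p => (I p.1).2 - (I p.1).1) (fun p => p.2)
      (fun p => Set.Icc (I p.1).1 (I p.1).2)
      (by
        intro p hp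
        intro y hy
        have h1 := hp.1
        have h2 := hp.2
        simp only [Set.mem_Icc] at hy
        rw [Real.closedBall_eq_Icc]
        simp only [Set.mem_Icc]
        constructor
        · linarith [hy.1, hy.2]
        · linarith [hy.1, hy.2])
      (by
        intro p hp
        have h := hlt p hp
        rw [Real.volume_closedBall, Real.volume_Icc]
        rw [← ENNReal.ofReal_coe_nnreal, ← ENNReal.ofReal_mul (by norm_num)]
        apply ENNReal.ofReal_le_ofReal
        push_cast
        linarith)
      (by
        intro p hp
        have h := hlt p hp
        rw [interior_Icc]
        exact ⟨p.2, hp⟩)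
      (fun p _ => isClosed_Icc)
      (by
        intro x hx ε hε
        obtain ⟨n, hn1, hn2⟩ := hsat x hx.2 ε hε
        have hab : (I n).1 < (I n).2 := lt_trans hn2.1 hn2.2
        refine ⟨(n, x), hn2, ?_, rfl⟩
        show (I n).2 - (I n).1 ≤ ε
        rw [show itv (I n) = Set.Ioo (I n).1 (I n).2 from rfl, Real.diam_Ioo hab.le] at hn1
        exact hn1.le)
  refine ⟨(fun p : ℕ × ℝ => p.1) '' u, ?_, ?_⟩
  · rintro - ⟨p, hp, rfl⟩ - ⟨q, hq, rfl⟩ hne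
    have : Disjoint (Set.Icc (I p.1).1 (I p.1).2) (Set.Icc (I q.1).1 (I q.1).2) :=
      hudisj hp hq (fun h => hne (congrArg Prod.fst h))
    exact this.mono Set.Ioo_subset_Icc_self Set.Ioo_subset_Icc_self
  · have hsub : Set.Icc (0:ℝ) 1 \ ⋃ n ∈ (fun p : ℕ × ℝ => p.1) '' u, itv (I n) ⊆
        (Set.Icc (0:ℝ) 1 \ ⋃ n, itv (I n)) ∪
        (s \ ⋃ p ∈ u, Set.Icc (I p.1).1 (I p.1).2) ∪
        (⋃ p ∈ u, (Set.Icc (I p.1).1 (I p.1).2 \ itv (I p.1))) := by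
      rintro x ⟨hx1, hx2⟩
      by_cases hxU : x ∈ ⋃ n, itv (I n)
      · by_cases hxI : x ∈ ⋃ p ∈ u, Set.Icc (I p.1).1 (I p.1).2
        · right
          obtain ⟨p, hp, hxp⟩ := Set.mem_iUnion₂.mp hxI
          refine Set.mem_biUnion hp ⟨hxp, ?_⟩
          intro hxo
          exact hx2 (Set.mem_biUnion ⟨p, hp, rfl⟩ hxo)
        · exact Or.inl (Or.inr ⟨⟨hx1, hxU⟩, hxI⟩)
      · exact Or.inl (Or.inl ⟨hx1, hxU⟩)
    refine measure_mono_null hsub ?_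
    refine measure_union_null (measure_union_null h0 humeas) ?_
    have : u.Countable := hucount
    refine (measure_biUnion_null_iff this).mpr ?_
    intro p hp
    refine measure_mono_null (fun x hx => ?_) (Set.Finite.measure_zero
      (Set.toFinite {(I p.1).1, (I p.1).2}) volume)
    rcases hx with ⟨⟨h1, h2⟩, h3⟩
    simp only [itv, Set.mem_Ioo, not_and_or, not_lt] at h3
    rcases h3 with h3 | h3
    · exact Or.inl (le_antisymm h3 h1)
    · exact Or.inr (by simp [le_antisymm h2 h3])
end

section
/- If I is a saturated sequence of open intervals that admits no pairwise disjoint subsequence J with λ([0,1] \ ⋃J) = 0, then λ([0,1] \ ⋃I) > 0; in particular [0,1] \ ⋃I is a nonempty closed subset of [0,1] of positive measure. -/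
open MeasureTheory Set

lemma null_closure_diff (q : ℝ × ℝ) : volume (closure (itv q) \ itv q) = 0 := by
  rcases lt_or_ge q.1 q.2 with hlt | hle
  · rw [itv, closure_Ioo hlt.ne, Set.Icc_diff_Ioo_same hlt.le]
    exact Set.Finite.measure_zero (Set.toFinite _) _
  · rw [itv, Set.Ioo_eq_empty (not_lt.2 hle)]; simp

lemma real_doubling (x : ℝ) : ∃ᶠ r in nhdsWithin 0 (Set.Ioi 0),
    volume (Metric.closedBall x (3 * r)) ≤ (6 : NNReal) * volume (Metric.closedBall x r) := by
  apply Filter.Eventually.frequently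
  filter_upwards [self_mem_nhdsWithin] with r (hr : 0 < r)
  rw [Real.volume_closedBall, Real.volume_closedBall,
    show ((6:NNReal):ENNReal) = ENNReal.ofReal 6 by norm_num,
    ← ENNReal.ofReal_mul (by norm_num)]
  exact ENNReal.ofReal_le_ofReal (by nlinarith)

theorem stmt6 (I : ℕ → ℝ × ℝ) (hsat : Saturated I)
    (h : ¬ ∃ S : Set ℕ, Eliminates I S (Set.Icc (0:ℝ) 1)) :
    0 < volume (Set.Icc (0:ℝ) 1 \ ⋃ n, itv (I n)) ∧
    (Set.Icc (0:ℝ) 1 \ ⋃ n, itv (I n)).Nonempty ∧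
    IsClosed (Set.Icc (0:ℝ) 1 \ ⋃ n, itv (I n)) ∧
    (Set.Icc (0:ℝ) 1 \ ⋃ n, itv (I n)) ⊆ Set.Icc (0:ℝ) 1 := by
  classical
  set U : Set ℝ := ⋃ n, itv (I n) with hU
  have hUopen : IsOpen U := isOpen_iUnion fun n => isOpen_Ioo
  have hpos : 0 < volume (Set.Icc (0:ℝ) 1 \ U) := by
    rw [pos_iff_ne_zero]
    intro h0
    -- Vitali family on ℝ
    let v := Vitali.vitaliFamily volume 6 real_doubling
    set s : Set ℝ := Set.Icc (0:ℝ) 1 ∩ U with hs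
    let f : ℝ → Set (Set ℝ) := fun x => {a | ∃ n, x ∈ itv (I n) ∧ a = closure (itv (I n))}
    have hfine : v.FineSubfamilyOn f s := by
      intro x hx ε hε
      obtain ⟨n, hdiam, hxn⟩ := hsat x hx.2 ε hε
      obtain ⟨h1, h2⟩ := hxn
      have hpq : (I n).1 < (I n).2 := h1.trans h2
      have hdiam' : (I n).2 - (I n).1 < ε := by
        rwa [itv, Real.diam_Ioo hpq.le] at hdiam
      have hsubball : ∀ r : ℝ, (I n).2 - (I n).1 ≤ r →
          closure (itv (I n)) ⊆ Metric.closedBall x r := by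
        intro r hr
        rw [itv, closure_Ioo hpq.ne, Real.closedBall_eq_Icc]
        intro y hy
        simp only [Set.mem_Icc] at hy ⊢
        constructor <;> linarith [hy.1, hy.2]
      refine ⟨closure (itv (I n)), ⟨⟨isClosed_closure, ?_, ⟨(I n).2 - (I n).1, hsubball _ le_rfl, ?_⟩⟩,
        ⟨n, ⟨h1, h2⟩, rfl⟩⟩, hsubball ε hdiam'.le⟩
      · rw [itv, closure_Ioo hpq.ne, interior_Icc]
        exact ⟨x, h1, h2⟩
      · rw [itv, closure_Ioo hpq.ne, Real.volume_closedBall, Real.volume_Icc,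
          show ((6:NNReal):ENNReal) = ENNReal.ofReal 6 by norm_num,
          ← ENNReal.ofReal_mul (by norm_num)]
        exact ENNReal.ofReal_le_ofReal (by nlinarith)
    obtain ⟨t, ht1, htdisj, htmem, htnull⟩ := hfine.exists_disjoint_covering_ae
    -- countability of t
    have htc : t.Countable := by
      apply htdisj.countable_of_nonempty_interior
      intro p hp
      obtain ⟨n, hxn, hpn⟩ := (htmem p hp).2
      have hpq : (I n).1 < (I n).2 := hxn.1.trans hxn.2
      rw [hpn, itv, closure_Ioo hpq.ne, interior_Icc]
      exact ⟨_, hxn⟩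
    -- choose least index for each covering set
    have hex : ∀ p ∈ t, {n | p.2 = closure (itv (I n))}.Nonempty := fun p hp => by
      obtain ⟨n, _, hpn⟩ := (htmem p hp).2; exact ⟨n, hpn⟩
    let g : ℝ × Set ℝ → ℕ := fun p => sInf {n | p.2 = closure (itv (I n))}
    have hg : ∀ p ∈ t, p.2 = closure (itv (I (g p))) := fun p hp =>
      Nat.sInf_mem (hex p hp)
    set S : Set ℕ := g '' t with hS
    apply h
    refine ⟨S, ?_, ?_⟩
    · -- pairwise disjoint
      rintro m ⟨p, hp, rfl⟩ n ⟨q, hq, rfl⟩ hmn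
      have hpq : p ≠ q := fun e => hmn (by rw [e])
      have hd : Disjoint p.2 q.2 := htdisj hp hq hpq
      exact hd.mono (hg p hp ▸ subset_closure) (hg q hq ▸ subset_closure)
    · -- null complement
      have hsubset : Set.Icc (0:ℝ) 1 \ ⋃ n ∈ S, itv (I n) ⊆
          (Set.Icc (0:ℝ) 1 \ U) ∪ (s \ ⋃ p ∈ t, p.2) ∪ ⋃ p ∈ t, (p.2 \ itv (I (g p))) := by
        intro x hx
        by_cases hxU : x ∈ U
        · by_cases hxt : x ∈ ⋃ p ∈ t, p.2
          · right
            obtain ⟨p, hp, hxp⟩ := Set.mem_iUnion₂.1 hxt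
            refine Set.mem_iUnion₂.2 ⟨p, hp, hxp, fun hxg => ?_⟩
            exact hx.2 (Set.mem_iUnion₂.2 ⟨g p, ⟨p, hp, rfl⟩, hxg⟩)
          · exact Or.inl (Or.inr ⟨⟨hx.1, hxU⟩, hxt⟩)
        · exact Or.inl (Or.inl ⟨hx.1, hxU⟩)
      refine measure_mono_null hsubset ?_
      refine measure_union_null (measure_union_null h0 htnull) ?_
      rw [measure_biUnion_null_iff htc]
      intro p hp
      exact measure_mono_null (Set.diff_subset_diff_left (hg p hp).le)
        (null_closure_diff (I (g p)))
  refine ⟨hpos, nonempty_of_measure_ne_zero hpos.ne', isClosed_Icc.sdiff hUopen, Set.diff_subset⟩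
end

section
/- If I is a saturated sequence of open intervals that does not admit a subsequence eliminating [0,1], then I does not cover [0,1]; that is, there exists x ∈ [0,1] with x ∉ ⋃I, and every such x is not captured by I. -/
open MeasureTheory Set

/-! If `[0,1] ⊆ ⋃ I`, saturation makes `I` a Vitali cover of `[0,1]`, and the Vitali covering
theorem (applied to the closed intervals, whose endpoints are null) yields a disjoint
subfamily covering almost all of `[0,1]`, i.e. an eliminating subsequence. -/

theorem Captures.mem_iUnion {I : ℕ → ℝ × ℝ} {x : ℝ} (h : Captures I x) :
    x ∈ ⋃ n, itv (I n) :=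
  let ⟨n, _, hn⟩ := h 1 one_pos
  Set.mem_iUnion.2 ⟨n, hn⟩

theorem IsVitaliCover.mono {I : ℕ → ℝ × ℝ} {A B : Set ℝ} (h : IsVitaliCover I B) (hAB : A ⊆ B) :
    IsVitaliCover I A :=
  fun x hx => h x (hAB hx)

theorem Icc_subset_closedBall_of_mem_Icc {a b x : ℝ} (hx : x ∈ Icc a b) :
    Icc a b ⊆ Metric.closedBall x (b - a) := by
  rw [Real.closedBall_eq_Icc]
  exact Icc_subset_Icc (by linarith [hx.2]) (by linarith [hx.1])

/-- Mathlib's Vitali theorem wants each set centred at the point it covers, so the closed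
intervals are indexed by pairs `(n, x)` with `x ∈ itv (I n)`, `x` serving as the centre. -/
theorem IsVitaliCover.exists_disjoint_Icc_ae_covering {I : ℕ → ℝ × ℝ} {A : Set ℝ}
    (hA : IsVitaliCover I A) :
    ∃ S : Set ℕ, S.Countable ∧
      (S.Pairwise fun m n => Disjoint (Icc (I m).1 (I m).2) (Icc (I n).1 (I n).2)) ∧
      volume (A \ ⋃ n ∈ S, Icc (I n).1 (I n).2) = 0 := by
  let t : Set (ℕ × ℝ) := {a | a.2 ∈ itv (I a.1)}
  let len : ℕ × ℝ → ℝ := fun a => (I a.1).2 - (I a.1).1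
  let B : ℕ × ℝ → Set ℝ := fun a => Icc (I a.1).1 (I a.1).2
  obtain ⟨u, -, hu_cnt, hu_disj, hu_null⟩ :=
    Vitali.exists_disjoint_covering_ae volume A t 6 len Prod.snd B
      (fun a ha => Icc_subset_closedBall_of_mem_Icc (Ioo_subset_Icc_self ha))
      (fun a _ => by
        rw [Real.volume_closedBall, Real.volume_Icc, ← mul_assoc,
          ENNReal.ofReal_mul (by norm_num)]
        norm_num [len])
      (fun a ha => by simpa only [B, interior_Icc] using ⟨a.2, ha⟩)
      (fun a _ => isClosed_Icc)
      (fun x hx ε hε => by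
        obtain ⟨n, hdiam, hxn⟩ := hA x hx ε hε
        refine ⟨(n, x), hxn, ?_, rfl⟩
        rw [itv, Real.diam_Ioo (hxn.1.trans hxn.2).le] at hdiam
        exact hdiam.le)
  refine ⟨Prod.fst '' u, hu_cnt.image _, ?_, ?_⟩
  · rintro _ ⟨a, ha, rfl⟩ _ ⟨b, hb, rfl⟩ hab
    exact hu_disj ha hb (ne_of_apply_ne Prod.fst hab)
  · refine measure_mono_null (sdiff_subset_sdiff_right ?_) hu_null
    exact iUnion₂_subset fun a ha => subset_biUnion_of_mem (u := fun n => Icc (I n).1 (I n).2)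
      (mem_image_of_mem Prod.fst ha)

theorem IsVitaliCover.exists_eliminates {I : ℕ → ℝ × ℝ} {A : Set ℝ} (hA : IsVitaliCover I A) :
    ∃ S, Eliminates I S A := by
  obtain ⟨S, hS, hdisj, hnull⟩ := hA.exists_disjoint_Icc_ae_covering
  refine ⟨S, fun m hm n hn hmn => (hdisj hm hn hmn).mono Ioo_subset_Icc_self Ioo_subset_Icc_self,
    ?_⟩
  have hae : (⋃ n ∈ S, itv (I n)) =ᵐ[volume] ⋃ n ∈ S, Icc (I n).1 (I n).2 :=
    Filter.EventuallyEq.countable_bUnion hS fun n _ => Ioo_ae_eq_Icc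
  rwa [measure_congr ((ae_eq_refl A).diff hae)]

theorem stmt7 (I : ℕ → ℝ × ℝ) (hsat : Saturated I)
    (h : ¬ ∃ S : Set ℕ, Eliminates I S (Set.Icc (0:ℝ) 1)) :
    (∃ x ∈ Set.Icc (0:ℝ) 1, x ∉ ⋃ n, itv (I n)) ∧
    ∀ x ∈ Set.Icc (0:ℝ) 1, x ∉ (⋃ n, itv (I n)) → ¬ Captures I x := by
  refine ⟨?_, fun x _ hx hcap => hx hcap.mem_iUnion⟩
  by_contra! hcov
  exact h (hsat.mono hcov).exists_eliminates
end

section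
/- If I = (I_n) is a sequence of open intervals that is an almost Vitali cover of [0,1], meaning for every ε > 0 the set U_ε := ⋃{I_n : diam(I_n) < ε} satisfies λ([0,1] \ U_ε) = 0, then there exists a pairwise disjoint subsequence J of I with λ([0,1] \ ⋃J) = 0. -/
open MeasureTheory Set

theorem stmt9 (I : ℕ → ℝ × ℝ)
    (h : ∀ ε : ℝ, 0 < ε →
      volume (Set.Icc (0:ℝ) 1 \ ⋃ n ∈ {n : ℕ | Metric.diam (itv (I n)) < ε}, itv (I n)) = 0) :
    ∃ S : Set ℕ, Eliminates I S (Set.Icc (0:ℝ) 1) := by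
  classical
  set A : Set ℝ := {x ∈ Set.Icc (0:ℝ) 1 | Captures I x} with hAdef
  -- A has full measure in [0,1]
  have hA : volume (Set.Icc (0:ℝ) 1 \ A) = 0 := by
    have hsub : Set.Icc (0:ℝ) 1 \ A ⊆
        ⋃ k : ℕ, (Set.Icc (0:ℝ) 1 \
          ⋃ n ∈ {n : ℕ | Metric.diam (itv (I n)) < 1 / (k + 1)}, itv (I n)) := by
      rintro x ⟨hx, hxA⟩
      have hnc : ¬ Captures I x := fun hc => hxA ⟨hx, hc⟩
      simp only [Captures, not_forall] at hnc
      obtain ⟨ε, hε, hno⟩ := hnc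
      push_neg at hno
      obtain ⟨k, hk⟩ := exists_nat_one_div_lt hε
      refine Set.mem_iUnion.2 ⟨k, hx, ?_⟩
      intro hmem
      simp only [Set.mem_iUnion, Set.mem_setOf_eq] at hmem
      obtain ⟨n, hn1, hn2⟩ := hmem
      exact hno n (lt_trans hn1 (by exact_mod_cast hk)) hn2
    refine measure_mono_null hsub (measure_iUnion_null fun k => h _ ?_)
    positivity
  -- set up Vitali
  set B : ℕ × ℝ → Set ℝ := fun p => Set.Icc (I p.1).1 (I p.1).2 with hBdef
  set t : Set (ℕ × ℝ) := {p | p.2 ∈ itv (I p.1)} with htdef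
  have key : ∀ p ∈ t, (I p.1).1 < (I p.1).2 ∧
      Metric.diam (itv (I p.1)) = (I p.1).2 - (I p.1).1 := by
    rintro p hp
    have := hp
    simp only [htdef, Set.mem_setOf_eq, itv, Set.mem_Ioo] at this
    exact ⟨this.1.trans this.2, Real.diam_Ioo (le_of_lt (this.1.trans this.2))⟩
  obtain ⟨u, hut, hucount, hudisj, hucover⟩ :=
    Vitali.exists_disjoint_covering_ae (μ := volume) A t 6
      (fun p => Metric.diam (itv (I p.1))) (fun p => p.2) B
      (by
        rintro p hp
        obtain ⟨hlt, hdiam⟩ := key p hp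
        have hx : p.2 ∈ Set.Ioo (I p.1).1 (I p.1).2 := hp
        rw [hdiam, Real.closedBall_eq_Icc]
        apply Set.Icc_subset_Icc <;> simp only [Set.mem_Ioo] at hx <;> linarith [hx.1, hx.2])
      (by
        rintro p hp
        obtain ⟨hlt, hdiam⟩ := key p hp
        rw [hdiam, Real.closedBall_eq_Icc, Real.volume_Icc, hBdef]
        simp only [Real.volume_Icc]
        have h1 : p.2 + 3 * ((I p.1).2 - (I p.1).1) - (p.2 - 3 * ((I p.1).2 - (I p.1).1))
            = 6 * ((I p.1).2 - (I p.1).1) := by ring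
        rw [h1, ENNReal.ofReal_mul (by norm_num)]
        norm_num)
      (by
        rintro p hp
        obtain ⟨hlt, hdiam⟩ := key p hp
        refine ⟨p.2, ?_⟩
        rw [hBdef]
        simp only [interior_Icc]
        exact hp)
      (fun p _ => isClosed_Icc)
      (by
        rintro x hx ε hε
        obtain ⟨n, hn1, hn2⟩ := hx.2 ε hε
        exact ⟨(n, x), hn2, le_of_lt hn1, rfl⟩)
  refine ⟨Prod.fst '' u, ?_, ?_⟩
  · -- pairwise disjoint
    rintro m ⟨pm, hpm, hm⟩ n ⟨pn, hpn, hn⟩ hmn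
    have hne : pm ≠ pn := by
      intro hEq; apply hmn; rw [← hm, ← hn, hEq]
    have := hudisj hpm hpn hne
    refine Disjoint.mono ?_ ?_ this
    · rw [← hm]; exact Set.Ioo_subset_Icc_self
    · rw [← hn]; exact Set.Ioo_subset_Icc_self
  · -- measure zero
    have hsub : Set.Icc (0:ℝ) 1 \ ⋃ n ∈ Prod.fst '' u, itv (I n) ⊆
        (Set.Icc (0:ℝ) 1 \ A) ∪ (A \ ⋃ p ∈ u, B p) ∪
        (⋃ n : ℕ, (Set.Icc (I n).1 (I n).2 \ itv (I n))) := by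
      rintro x ⟨hx, hxU⟩
      by_cases hxA : x ∈ A
      · by_cases hxB : x ∈ ⋃ p ∈ u, B p
        · simp only [Set.mem_iUnion] at hxB
          obtain ⟨p, hp, hxp⟩ := hxB
          refine Or.inr (Set.mem_iUnion.2 ⟨p.1, hxp, ?_⟩)
          intro hmem
          exact hxU (Set.mem_iUnion₂.2 ⟨p.1, ⟨p, hp, rfl⟩, hmem⟩)
        · exact Or.inl (Or.inr ⟨hxA, hxB⟩)
      · exact Or.inl (Or.inl ⟨hx, hxA⟩)
    refine measure_mono_null hsub ?_
    refine measure_union_null (measure_union_null hA hucover) ?_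
    refine measure_iUnion_null fun n => ?_
    refine measure_mono_null (t := ({(I n).1, (I n).2} : Set ℝ)) ?_ ?_
    · intro y hy
      rcases hy with ⟨hy1, hy2⟩
      simp only [itv, Set.mem_Ioo, not_and_or, not_lt] at hy2
      simp only [Set.mem_insert_iff, Set.mem_singleton_iff]
      rcases hy2 with h1 | h2
      · exact Or.inl (le_antisymm h1 hy1.1)
      · exact Or.inr (le_antisymm hy1.2 h2)
    · exact measure_union_null (measure_singleton _) (measure_singleton _)
end
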